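/- For all positive integers dA and d with d ≤ dA², there exists a family 𝒫 of real polynomials in the 2·d·dA² real coordinates (real and imaginary parts) of a d-tuple (v_1, …, v_d) of vectors in ℂ^{dA} ⊗ ℂ^{dA} such that: a tuple of linearly independent vectors is a common zero of all polynomials in 𝒫 if and only if the subspace S = span{v_1, …, v_d} satisfies the orthogonality constraint S ⊥ ((I+X) ⊗ (I−X))·S^⊥, i.e. ⟨φ, ((I+X) ⊗ (I−X)) ψ⟩ = 0 for all φ ∈ S and ψ ∈ S^⊥. In other words, the set of linearly independent d-tuples spanning a subspace satisfying this constraint is the intersection of a real Zariski-closed (algebraic) set with the set of linearly independent tuples. -/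

import Mathlib

open Matrix

noncomputable section

/-- Orthogonal complement (as a set) of a set of vectors, with respect to the
standard Hermitian inner product `⟨φ, ψ⟩ = (star φ) ⬝ᵥ ψ`. -/
def hermOrthSet {α : Type*} [Fintype α] (S : Set (α → ℂ)) : Set (α → ℂ) :=
  {ψ | ∀ φ ∈ S, star φ ⬝ᵥ ψ = 0}

/-- The real coordinates of a `d`-tuple of vectors in `ℂ^{dA} ⊗ ℂ^{dA}`: the real
part (`true`) and imaginary part (`false`) of each complex entry. -/
def realCoords {d dA : ℕ} (v : Fin d → (Fin dA × Fin dA) → ℂ) :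
    Fin d × (Fin dA × Fin dA) × Bool → ℝ :=
  fun x => if x.2.2 then (v x.1 x.2.1).re else (v x.1 x.2.1).im

/-- The `n×n` matrix with ones on the anti-diagonal and zeros elsewhere. -/
def Xmat (n : ℕ) : Matrix (Fin n) (Fin n) ℂ :=
  Matrix.of fun i j => if (i : ℕ) + (j : ℕ) = n - 1 then 1 else 0

/-- The orthogonality constraint `S ⊥ ((I+X) ⊗ (I−X))·S^⊥`:
`⟨φ, ((I+X)⊗(I−X)) ψ⟩ = 0` for all `φ ∈ S` and `ψ ∈ S^⊥`. -/
def OrthConstraint {dA : ℕ} (S : Submodule ℂ ((Fin dA × Fin dA) → ℂ)) : Prop :=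
  ∀ φ ∈ S, ∀ ψ ∈ hermOrthSet (S : Set ((Fin dA × Fin dA) → ℂ)),
    star φ ⬝ᵥ ((Matrix.kroneckerMap (· * ·) (1 + Xmat dA) (1 - Xmat dA)) *ᵥ ψ) = 0

/-!
The matrix `M = (I+X) ⊗ (I−X)` is Hermitian, so `⟨φ, M ψ⟩ = ⟨M φ, ψ⟩`, and since `S^⊥⊥ = S`
the constraint says exactly that `M` maps `S = span v` into itself, i.e. `M vᵢ ∈ span v` for
every `i`. For independent `v` this is the vanishing of the Gram determinant of
`(v₁, …, v_d, M vᵢ)`. That determinant is a complex polynomial in the real and imaginary parts of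
the entries of `v` (at real points, conjugating a value is conjugating the coefficients), and its
real and imaginary parts are the required real polynomials.
-/

open MvPolynomial ComplexConjugate
open scoped InnerProductSpace

section Orthogonality

variable {ι : Type*} [Fintype ι]

theorem mem_of_forall_hermOrthSet {S : Submodule ℂ (ι → ℂ)} {u : ι → ℂ}
    (hu : ∀ ψ ∈ hermOrthSet (S : Set (ι → ℂ)), star u ⬝ᵥ ψ = 0) : u ∈ S := by
  let T : Submodule ℂ (EuclideanSpace ℂ ι) :=
    S.comap (WithLp.linearEquiv 2 ℂ (ι → ℂ)).toLinearMap
  have hinner (x y : EuclideanSpace ℂ ι) : ⟪x, y⟫_ℂ = star x.ofLp ⬝ᵥ y.ofLp := by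
    rw [EuclideanSpace.inner_eq_star_dotProduct, dotProduct_comm]
  have hu' : WithLp.toLp 2 u ∈ Tᗮᗮ := by
    refine (Submodule.mem_orthogonal' _ _).2 fun ψ hψ => ?_
    rw [hinner]
    refine hu _ fun φ hφ => ?_
    simpa [hinner] using (Submodule.mem_orthogonal _ _).1 hψ (WithLp.toLp 2 φ) hφ
  rwa [Submodule.orthogonal_orthogonal] at hu'

theorem forall_hermOrthSet_mulVec_iff {M : Matrix ι ι ℂ} (hM : M.IsHermitian)
    (S : Submodule ℂ (ι → ℂ)) :
    (∀ φ ∈ S, ∀ ψ ∈ hermOrthSet (S : Set (ι → ℂ)), star φ ⬝ᵥ (M *ᵥ ψ) = 0) ↔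
      ∀ φ ∈ S, M *ᵥ φ ∈ S := by
  have hadj (φ ψ : ι → ℂ) : star φ ⬝ᵥ (M *ᵥ ψ) = star (M *ᵥ φ) ⬝ᵥ ψ := by
    rw [star_mulVec, hM.eq, dotProduct_mulVec]
  simp only [hadj]
  exact ⟨fun h φ hφ => mem_of_forall_hermOrthSet (h φ hφ), fun h φ hφ ψ hψ => hψ _ (h φ hφ)⟩

theorem forall_mem_span_mulVec_mem_iff {m : Type*} (M : Matrix ι ι ℂ) (v : m → ι → ℂ) :
    (∀ φ ∈ Submodule.span ℂ (Set.range v), M *ᵥ φ ∈ Submodule.span ℂ (Set.range v)) ↔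
      ∀ i, M *ᵥ v i ∈ Submodule.span ℂ (Set.range v) :=
  ⟨fun h i => h _ (Submodule.subset_span (Set.mem_range_self i)), fun h =>
    Submodule.span_le (p := (Submodule.span ℂ (Set.range v)).comap M.mulVecLin).2
      (Set.range_subset_iff.2 h)⟩

theorem isHermitian_Xmat (n : ℕ) : (Xmat n).IsHermitian := by
  ext i j
  simp only [conjTranspose_apply, Xmat, of_apply, add_comm (j : ℕ)]
  split_ifs <;> simp

theorem isHermitian_kronecker_Xmat (n : ℕ) :
    (kroneckerMap (· * ·) (1 + Xmat n) (1 - Xmat n)).IsHermitian := by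
  rw [IsHermitian, conjTranspose_kronecker, (isHermitian_one.add (isHermitian_Xmat n)).eq,
    (isHermitian_one.sub (isHermitian_Xmat n)).eq]

end Orthogonality

section Gram

variable {ι : Type*} [Fintype ι]

theorem det_gram_toLp_eq_zero_iff {m : Type*} [Fintype m] [DecidableEq m] (w : m → ι → ℂ) :
    (gram ℂ fun i => WithLp.toLp 2 (w i)).det = 0 ↔ ¬ LinearIndependent ℂ w := by
  rw [← not_iff_not, not_not, ← ne_eq, det_gram_ne_zero_iff_linearIndependent]
  exact LinearMap.linearIndependent_iff (WithLp.linearEquiv 2 ℂ (ι → ℂ)).symm.toLinearMap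
    (LinearEquiv.ker _)

theorem mem_span_iff_det_gram_snoc_eq_zero {d : ℕ} {v : Fin d → ι → ℂ}
    (hv : LinearIndependent ℂ v) (w : ι → ℂ) :
    w ∈ Submodule.span ℂ (Set.range v) ↔
      (gram ℂ fun i => WithLp.toLp 2 ((Fin.snoc v w : Fin (d + 1) → ι → ℂ) i)).det = 0 := by
  rw [det_gram_toLp_eq_zero_iff, linearIndependent_finSnoc]
  tauto

end Gram

namespace MvPolynomial

variable {σ : Type*}

def mapCoeffs {R A : Type*} [CommSemiring R] [CommSemiring A] [Module R A] (f : A →ₗ[R] R)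
    (q : MvPolynomial σ A) : MvPolynomial σ R :=
  AddMonoidAlgebra.map f.toAddMonoidHom q

theorem eval_mapCoeffs {R A : Type*} [CommSemiring R] [CommSemiring A] [Algebra R A]
    (f : A →ₗ[R] R) (q : MvPolynomial σ A) (x : σ → R) :
    eval x (q.mapCoeffs f) = f (eval (algebraMap R A ∘ x) q) := by
  induction q using MvPolynomial.induction_on' with
  | monomial u a =>
    rw [mapCoeffs, ← single_eq_monomial, AddMonoidAlgebra.map_single, single_eq_monomial,
      single_eq_monomial, eval_monomial, eval_monomial]
    simp only [Finsupp.prod, Function.comp_apply, ← map_pow, ← map_prod]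
    rw [← Algebra.commutes, ← Algebra.smul_def, map_smul, smul_eq_mul, mul_comm]
    rfl
  | add p q hp hq =>
    rw [mapCoeffs, AddMonoidAlgebra.map_add, ← mapCoeffs, ← mapCoeffs, map_add, hp, hq, map_add,
      map_add]

theorem eval_ofReal_eq_zero_iff (q : MvPolynomial σ ℂ) (x : σ → ℝ) :
    eval (Complex.ofReal ∘ x) q = 0 ↔
      eval x (q.mapCoeffs Complex.reLm) = 0 ∧ eval x (q.mapCoeffs Complex.imLm) = 0 := by
  simp [eval_mapCoeffs, Complex.ext_iff]

theorem eval_map_conj (q : MvPolynomial σ ℂ) (x : σ → ℝ) :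
    eval (Complex.ofReal ∘ x) (map (starRingEnd ℂ) q) = conj (eval (Complex.ofReal ∘ x) q) := by
  rw [eval_map, eval, coe_eval₂Hom, eval₂_comp_left]
  congr 1
  funext i
  simp

end MvPolynomial

section GramPolynomial

variable {σ ι : Type*} [Fintype ι]

def gramPoly {m : Type*} (w : m → ι → MvPolynomial σ ℂ) : Matrix m m (MvPolynomial σ ℂ) :=
  of fun i j => w j ⬝ᵥ fun k => map (starRingEnd ℂ) (w i k)

theorem map_eval_gramPoly {m : Type*} (w : m → ι → MvPolynomial σ ℂ) (x : σ → ℝ) :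
    (gramPoly w).map (eval (Complex.ofReal ∘ x)) =
      gram ℂ fun i => WithLp.toLp 2 fun k => eval (Complex.ofReal ∘ x) (w i k) := by
  ext i j
  simp only [gramPoly, map_apply, of_apply, gram_apply, EuclideanSpace.inner_toLp_toLp,
    dotProduct, map_sum, map_mul, eval_map_conj, Pi.star_apply, RCLike.star_def]

variable {d dA : ℕ}

def coordPoly (j : Fin d) (k : Fin dA × Fin dA) :
    MvPolynomial (Fin d × (Fin dA × Fin dA) × Bool) ℂ :=
  X (j, k, true) + C Complex.I * X (j, k, false)

theorem eval_coordPoly (v : Fin d → (Fin dA × Fin dA) → ℂ) (j : Fin d) (k : Fin dA × Fin dA) :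
    eval (Complex.ofReal ∘ realCoords v) (coordPoly j k) = v j k := by
  simpa [coordPoly, realCoords, mul_comm] using Complex.re_add_im (v j k)

def invariancePoly (M : Matrix (Fin dA × Fin dA) (Fin dA × Fin dA) ℂ) (i : Fin d) :
    MvPolynomial (Fin d × (Fin dA × Fin dA) × Bool) ℂ :=
  (gramPoly (Fin.snoc coordPoly (M.map C *ᵥ coordPoly i))).det

theorem eval_invariancePoly (M : Matrix (Fin dA × Fin dA) (Fin dA × Fin dA) ℂ)
    (v : Fin d → (Fin dA × Fin dA) → ℂ) (i : Fin d) :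
    eval (Complex.ofReal ∘ realCoords v) (invariancePoly M i) =
      (gram ℂ fun j => WithLp.toLp 2 ((Fin.snoc v (M *ᵥ v i) : Fin (d + 1) → _) j)).det := by
  rw [invariancePoly, RingHom.map_det, RingHom.mapMatrix_apply, map_eval_gramPoly]
  congr
  funext j
  induction j using Fin.lastCases with
  | last =>
    have hv : eval (Complex.ofReal ∘ realCoords v) ∘ coordPoly i = v i :=
      funext (eval_coordPoly v i)
    have hM : (M.map C).map (eval (Complex.ofReal ∘ realCoords v)) = M := by ext; simp
    ext k
    simp only [Fin.snoc_last]
    rw [RingHom.map_mulVec, hM, hv]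
  | cast j => simp [eval_coordPoly]

end GramPolynomial

theorem exists_polys_iff_forall_mulVec_mem_span {d dA : ℕ}
    (M : Matrix (Fin dA × Fin dA) (Fin dA × Fin dA) ℂ) :
    ∃ Polys : Set (MvPolynomial (Fin d × (Fin dA × Fin dA) × Bool) ℝ),
      ∀ v : Fin d → (Fin dA × Fin dA) → ℂ, LinearIndependent ℂ v →
        ((∀ p ∈ Polys, eval (realCoords v) p = 0) ↔
          ∀ i, M *ᵥ v i ∈ Submodule.span ℂ (Set.range v)) := by
  refine ⟨Set.range (fun i => (invariancePoly M i).mapCoeffs Complex.reLm) ∪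
    Set.range (fun i => (invariancePoly M i).mapCoeffs Complex.imLm), fun v hv => ?_⟩
  have hmem (i : Fin d) : M *ᵥ v i ∈ Submodule.span ℂ (Set.range v) ↔
      eval (realCoords v) ((invariancePoly M i).mapCoeffs Complex.reLm) = 0 ∧
        eval (realCoords v) ((invariancePoly M i).mapCoeffs Complex.imLm) = 0 := by
    rw [mem_span_iff_det_gram_snoc_eq_zero hv, ← eval_invariancePoly, eval_ofReal_eq_zero_iff]
  simp only [Set.mem_union, or_imp, forall_and, Set.forall_mem_range, hmem]

theorem orth_constraint_is_algebraic_general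
    (dA d : ℕ) :
    ∃ Polys : Set (MvPolynomial (Fin d × (Fin dA × Fin dA) × Bool) ℝ),
      ∀ v : Fin d → (Fin dA × Fin dA) → ℂ, LinearIndependent ℂ v →
        ((∀ p ∈ Polys, MvPolynomial.eval (realCoords v) p = 0) ↔
          OrthConstraint (Submodule.span ℂ (Set.range v))) := by
  obtain ⟨Polys, hPolys⟩ := exists_polys_iff_forall_mulVec_mem_span (d := d)
    (kroneckerMap (· * ·) (1 + Xmat dA) (1 - Xmat dA))
  refine ⟨Polys, fun v hv => ?_⟩
  rw [hPolys v hv, OrthConstraint, forall_hermOrthSet_mulVec_iff (isHermitian_kronecker_Xmat dA),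
    forall_mem_span_mulVec_mem_iff]

/-- **The orthogonality constraint is a real algebraic condition (Lemma 5 of the
paper).**  There is a family of real polynomials in the real coordinates of a
`d`-tuple of vectors in `ℂ^{dA} ⊗ ℂ^{dA}` whose common zeros, among linearly
independent tuples, are exactly the tuples whose span `S` satisfies
`S ⊥ ((I+X) ⊗ (I−X))·S^⊥`. -/
theorem orth_constraint_is_algebraic
    (dA d : ℕ) (hdA : 0 < dA) (hd : 0 < d) (hdim : d ≤ dA * dA) :
    ∃ Polys : Set (MvPolynomial (Fin d × (Fin dA × Fin dA) × Bool) ℝ),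
      ∀ v : Fin d → (Fin dA × Fin dA) → ℂ, LinearIndependent ℂ v →
        ((∀ p ∈ Polys, MvPolynomial.eval (realCoords v) p = 0) ↔
          OrthConstraint (Submodule.span ℂ (Set.range v))) :=
  orth_constraint_is_algebraic_general dA d
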